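/- Let a ≥ 1 be a real number, let n ≥ 4a be an integer, let f: {0,1}^n → ℝ be a nonnegative a-self-bounding function, and let ε ∈ (0,1]. Set ρ = 1 − ε/(2a), d = ⌈(2a/ε)·ln(3/ε)⌉, and define the multilinear polynomial p(x) = Σ_{S⊆[n], |S|<d} ρ^{|S|} · f̂(S) · χ_S(x). Then ‖f − p‖_1 ≤ ε·‖f‖_2. -/

import Mathlib

noncomputable section

/-- A function `f : {0,1}^n → ℝ` is `a`-self-bounding. -/
def SelfBounding (n : ℕ) (a : ℝ) (f : (Fin n → Bool) → ℝ) : Prop :=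
  ∀ x : Fin n → Bool,
    (∀ i : Fin n,
      f x - min (f (Function.update x i false)) (f (Function.update x i true)) ≤ 1) ∧
    ∑ i : Fin n,
      (f x - min (f (Function.update x i false)) (f (Function.update x i true))) ≤ a * f x

/-- Expectation with respect to the uniform distribution on `{0,1}^n`. -/
def expect (n : ℕ) (g : (Fin n → Bool) → ℝ) : ℝ :=
  (∑ x : Fin n → Bool, g x) / 2 ^ n

/-- The parity function `χ_S(x) = (-1)^{Σ_{i∈S} x_i}`. -/
def parity (n : ℕ) (S : Finset (Fin n)) (x : Fin n → Bool) : ℝ :=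
  (-1 : ℝ) ^ (S.filter (fun i => x i = true)).card

/-- Fourier coefficient `f̂(S) = E[f ⬝ χ_S]`. -/
def fourierHat (n : ℕ) (f : (Fin n → Bool) → ℝ) (S : Finset (Fin n)) : ℝ :=
  expect n (fun x => f x * parity n S x)

/-!
Let `T_ρ f (x) = E_e f (x ⊕ e)`, where each coordinate of `e` is set independently with
probability `(1 - ρ) / 2`. On the Fourier side `T_ρ f = ∑_S ρ^|S| f̂(S) χ_S`, so `p` is `T_ρ f` with
the levels `|S| ≥ d` removed.

Flipping the coordinates of `e` one at a time, `f` decreases at each step by at most the drop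
`f y - min (f y_{i←0}) (f y_{i←1})` of the flipped coordinate. As `x ↦ x ⊕ e` preserves the
uniform measure, the mean of `|f - f (· ⊕ e)|` is twice the mean of its positive part, and
averaging over `e` gives `‖f - T_ρ f‖₁ ≤ (1 - ρ) E[∑ᵢ dropᵢ f] ≤ (1 - ρ) a E f = (ε/2) E f`.

The rest `T_ρ f - p` lives on the levels `|S| ≥ d`, which are damped by
`ρ^d ≤ exp (-d ε / (2a)) ≤ ε / 3`; by Parseval and Cauchy–Schwarz, `‖T_ρ f - p‖₁ ≤ (ε/3) ‖f‖₂`.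
-/

lemma Function.Involutive.sum_abs_sub_eq_two_mul_sum_posPart {α : Type*} [Fintype α] {σ : α → α}
    (hσ : Function.Involutive σ) (g : α → ℝ) :
    ∑ x, |g x - g (σ x)| = 2 * ∑ x, (g x - g (σ x))⁺ := by
  have balanced : ∑ x, (g x - g (σ x)) = 0 := by
    rw [Finset.sum_sub_distrib, hσ.bijective.sum_comp g, sub_self]
  rw [← add_zero (∑ x, |g x - g (σ x)|), ← balanced, ← Finset.sum_add_distrib, Finset.mul_sum]
  simp only [abs_add_eq_two_nsmul_posPart, nsmul_eq_mul, Nat.cast_ofNat]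

lemma one_sub_pow_le_of_log_le {t δ : ℝ} {d : ℕ} (ht₁ : t ≤ 1) (hδ : 0 < δ)
    (hd : Real.log (1 / δ) ≤ d * t) : (1 - t) ^ d ≤ δ :=
  calc (1 - t) ^ d ≤ Real.exp (-t) ^ d :=
        pow_le_pow_left₀ (by linarith) (Real.one_sub_le_exp_neg t) d
    _ = Real.exp (-(d * t)) := by rw [← Real.exp_nat_mul, mul_neg]
    _ ≤ Real.exp (-Real.log (1 / δ)) := Real.exp_le_exp.mpr (neg_le_neg hd)
    _ = δ := by rw [Real.exp_neg, Real.exp_log (by positivity), one_div, inv_inv]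

namespace BoolCube

variable {n : ℕ}

def spin (b : Bool) : ℝ := if b then -1 else 1

@[simp] lemma spin_false : spin false = 1 := rfl

@[simp] lemma spin_true : spin true = -1 := rfl

lemma spin_xor (b c : Bool) : spin (xor b c) = spin b * spin c := by
  cases b <;> cases c <;> norm_num

lemma spin_mul_self (b : Bool) : spin b * spin b = 1 := by
  cases b <;> norm_num

lemma sum_prod_eq_prod_add (g : Fin n → Bool → ℝ) :
    ∑ x : Fin n → Bool, ∏ i, g i (x i) = ∏ i, (g i true + g i false) := by
  simp only [← Fintype.prod_sum, Fintype.sum_bool]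

lemma prod_ite_two_zero (P : Fin n → Prop) [DecidablePred P] :
    ∏ i, (if P i then (2 : ℝ) else 0) = if ∀ i, P i then 2 ^ n else 0 := by
  simp [Finset.prod_ite_zero]

lemma parity_eq_prod (S : Finset (Fin n)) (x : Fin n → Bool) :
    parity n S x = ∏ i ∈ S, spin (x i) := by
  simp [parity, spin, Finset.prod_ite]

lemma parity_eq_prod_univ (S : Finset (Fin n)) (x : Fin n → Bool) :
    parity n S x = ∏ i, if i ∈ S then spin (x i) else 1 := by
  rw [parity_eq_prod, Fintype.prod_ite_mem]

lemma parity_symmDiff (S T : Finset (Fin n)) (x : Fin n → Bool) :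
    parity n (symmDiff S T) x = parity n S x * parity n T x := by
  simp only [parity_eq_prod_univ, ← Finset.prod_mul_distrib, Finset.mem_symmDiff]
  refine Finset.prod_congr rfl fun i _ => ?_
  by_cases hS : i ∈ S <;> by_cases hT : i ∈ T <;> simp [hS, hT, spin_mul_self]

lemma sum_parity (S : Finset (Fin n)) :
    ∑ x : Fin n → Bool, parity n S x = if S = ∅ then 2 ^ n else 0 := by
  simp only [parity_eq_prod_univ]
  rw [sum_prod_eq_prod_add fun i b => if i ∈ S then spin b else 1]
  have factor : ∀ i, (if i ∈ S then spin true else 1) + (if i ∈ S then spin false else 1)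
      = if i ∉ S then (2 : ℝ) else 0 := by
    intro i; by_cases hi : i ∈ S <;> simp [hi]; norm_num
  simp only [factor, prod_ite_two_zero, Finset.eq_empty_iff_forall_notMem]

lemma sum_parity_mul_parity (S T : Finset (Fin n)) :
    ∑ x : Fin n → Bool, parity n S x * parity n T x = if S = T then 2 ^ n else 0 := by
  simp only [← parity_symmDiff, sum_parity, Finset.symmDiff_eq_empty]

lemma sum_finset_parity_mul_parity (x y : Fin n → Bool) :
    ∑ S : Finset (Fin n), parity n S x * parity n S y = if x = y then 2 ^ n else 0 := by
  simp only [parity_eq_prod, ← Finset.prod_mul_distrib]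
  rw [← Finset.powerset_univ, ← Finset.prod_one_add]
  have factor : ∀ i, 1 + spin (x i) * spin (y i) = if x i = y i then (2 : ℝ) else 0 := by
    intro i; cases x i <;> cases y i <;> norm_num
  simp only [factor, prod_ite_two_zero, funext_iff]

lemma fourier_inversion (f : (Fin n → Bool) → ℝ) (x : Fin n → Bool) :
    ∑ S : Finset (Fin n), fourierHat n f S * parity n S x = f x := by
  simp only [fourierHat, expect, div_mul_eq_mul_div, Finset.sum_mul, ← Finset.sum_div]
  rw [Finset.sum_comm]
  simp only [mul_assoc, ← Finset.mul_sum, sum_finset_parity_mul_parity, mul_ite, mul_zero,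
    Finset.sum_ite_eq', Finset.mem_univ, if_true]
  field_simp

lemma expect_sq_sum_parity (A : Finset (Finset (Fin n))) (c : Finset (Fin n) → ℝ) :
    expect n (fun x => (∑ S ∈ A, c S * parity n S x) ^ 2) = ∑ S ∈ A, c S ^ 2 := by
  have expand : ∀ x : Fin n → Bool, (∑ S ∈ A, c S * parity n S x) ^ 2
      = ∑ S ∈ A, ∑ T ∈ A, c S * c T * (parity n S x * parity n T x) := by
    intro x
    rw [sq, Finset.sum_mul_sum]
    exact Finset.sum_congr rfl fun S _ => Finset.sum_congr rfl fun T _ => by ring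
  rw [expect, Finset.sum_congr rfl fun x _ => expand x, Finset.sum_comm]
  simp only [Finset.sum_comm (s := Finset.univ), ← Finset.mul_sum, sum_parity_mul_parity,
    mul_ite, mul_zero, Finset.sum_ite_eq]
  rw [Finset.sum_ite_of_true fun _ h => h, Finset.sum_div]
  exact Finset.sum_congr rfl fun S _ => by field_simp

lemma parseval (f : (Fin n → Bool) → ℝ) :
    expect n (fun x => f x ^ 2) = ∑ S : Finset (Fin n), fourierHat n f S ^ 2 := by
  conv_lhs => enter [2, x]; rw [← fourier_inversion f x]
  exact expect_sq_sum_parity _ _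

lemma expect_mono {u v : (Fin n → Bool) → ℝ} (h : ∀ x, u x ≤ v x) :
    expect n u ≤ expect n v :=
  div_le_div_of_nonneg_right (Finset.sum_le_sum fun x _ => h x) (by positivity)

lemma expect_abs_sub_le (u v w : (Fin n → Bool) → ℝ) :
    expect n (fun x => |u x - w x|)
      ≤ expect n (fun x => |u x - v x|) + expect n (fun x => |v x - w x|) := by
  rw [expect, expect, expect, ← add_div, ← Finset.sum_add_distrib]
  exact expect_mono fun x => abs_sub_le (u x) (v x) (w x)

lemma expect_abs_le_sqrt (g : (Fin n → Bool) → ℝ) :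
    expect n (fun x => |g x|) ≤ √(expect n (fun x => g x ^ 2)) := by
  refine Real.le_sqrt_of_sq_le ?_
  have cauchySchwarz := sq_sum_le_card_mul_sum_sq (s := Finset.univ) (f := fun x => |g x|)
  simp only [sq_abs, Finset.card_univ, Fintype.card_fun, Fintype.card_bool,
    Fintype.card_fin] at cauchySchwarz
  push_cast at cauchySchwarz
  rw [expect, expect, div_pow, sq ((2 : ℝ) ^ n), ← div_div]
  gcongr
  rw [div_le_iff₀ (by positivity)]
  linarith

def bxor (x e : Fin n → Bool) : Fin n → Bool := fun i => xor (x i) (e i)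

lemma bxor_involutive (e : Fin n → Bool) : Function.Involutive (bxor · e) := fun x => by
  funext i; simp [bxor]

lemma parity_bxor (S : Finset (Fin n)) (x e : Fin n → Bool) :
    parity n S (bxor x e) = parity n S x * parity n S e := by
  simp only [parity_eq_prod, bxor, spin_xor, Finset.prod_mul_distrib]

def noiseWeight (ρ : ℝ) (e : Fin n → Bool) : ℝ := ∏ i, (1 + ρ * spin (e i)) / 2

def noise (ρ : ℝ) (f : (Fin n → Bool) → ℝ) (x : Fin n → Bool) : ℝ :=
  ∑ e, noiseWeight ρ e * f (bxor x e)

lemma noiseWeight_nonneg {ρ : ℝ} (hρ : |ρ| ≤ 1) (e : Fin n → Bool) : 0 ≤ noiseWeight ρ e := by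
  obtain ⟨hρ₀, hρ₁⟩ := abs_le.mp hρ
  refine Finset.prod_nonneg fun i _ => ?_
  cases e i <;> simp <;> linarith

lemma sum_noiseWeight_mul_parity (ρ : ℝ) (S : Finset (Fin n)) :
    ∑ e : Fin n → Bool, noiseWeight ρ e * parity n S e = ρ ^ S.card := by
  simp only [noiseWeight, parity_eq_prod_univ, ← Finset.prod_mul_distrib]
  rw [sum_prod_eq_prod_add fun i b => (1 + ρ * spin b) / 2 * if i ∈ S then spin b else 1,
    ← Finset.prod_const, ← Fintype.prod_ite_mem S]
  refine Finset.prod_congr rfl fun i _ => ?_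
  by_cases hi : i ∈ S <;> simp [hi] <;> ring

lemma sum_noiseWeight (ρ : ℝ) : ∑ e : Fin n → Bool, noiseWeight ρ e = 1 := by
  simpa [parity] using sum_noiseWeight_mul_parity (n := n) ρ ∅

lemma sum_ite_noiseWeight (ρ : ℝ) (k : Fin n) :
    ∑ e : Fin n → Bool, (if e k then noiseWeight ρ e else 0) = (1 - ρ) / 2 := by
  have indicator : ∀ e : Fin n → Bool,
      (if e k then noiseWeight ρ e else 0)
        = (noiseWeight ρ e - noiseWeight ρ e * parity n {k} e) / 2 := by
    intro e; cases h : e k <;> simp [parity_eq_prod, h]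
  simp only [indicator, ← Finset.sum_div, Finset.sum_sub_distrib, sum_noiseWeight,
    sum_noiseWeight_mul_parity, Finset.card_singleton, pow_one]

lemma noise_eq_sum_fourier (ρ : ℝ) (f : (Fin n → Bool) → ℝ) (x : Fin n → Bool) :
    noise ρ f x = ∑ S : Finset (Fin n), ρ ^ S.card * fourierHat n f S * parity n S x := by
  simp only [noise, ← fourier_inversion f (bxor x _), parity_bxor, Finset.mul_sum]
  rw [Finset.sum_comm]
  refine Finset.sum_congr rfl fun S _ => ?_
  rw [← sum_noiseWeight_mul_parity ρ S, Finset.sum_mul, Finset.sum_mul]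
  exact Finset.sum_congr rfl fun e _ => by ring

lemma expect_abs_noise_sub_low_le {ρ : ℝ} (hρ₀ : 0 ≤ ρ) (hρ₁ : ρ ≤ 1) (d : ℕ)
    (f : (Fin n → Bool) → ℝ) :
    expect n (fun x => |noise ρ f x -
        ∑ S ∈ Finset.univ.filter (fun S : Finset (Fin n) => S.card < d),
          ρ ^ S.card * fourierHat n f S * parity n S x|)
      ≤ ρ ^ d * √(expect n (fun x => f x ^ 2)) := by
  set high := Finset.univ.filter fun S : Finset (Fin n) => ¬ S.card < d
  have tail : ∀ x, noise ρ f x - ∑ S ∈ Finset.univ.filter (fun S : Finset (Fin n) => S.card < d),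
        ρ ^ S.card * fourierHat n f S * parity n S x
      = ∑ S ∈ high, ρ ^ S.card * fourierHat n f S * parity n S x := by
    intro x
    rw [noise_eq_sum_fourier, ← Finset.sum_filter_add_sum_filter_not Finset.univ
      (fun S : Finset (Fin n) => S.card < d), add_sub_cancel_left]
  have damped : ∑ S ∈ high, (ρ ^ S.card * fourierHat n f S) ^ 2
      ≤ (ρ ^ d) ^ 2 * expect n (fun x => f x ^ 2) := by
    rw [parseval, Finset.mul_sum]
    refine (Finset.sum_le_sum fun S hS => ?_).trans
      (Finset.sum_le_sum_of_subset_of_nonneg (Finset.filter_subset _ _) fun _ _ _ => by positivity)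
    have hdS : d ≤ S.card := not_lt.mp (Finset.mem_filter.mp hS).2
    rw [mul_pow]
    gcongr ?_ ^ 2 * _
    exact pow_le_pow_of_le_one hρ₀ hρ₁ hdS
  calc _ ≤ √(expect n fun x => (∑ S ∈ high, ρ ^ S.card * fourierHat n f S * parity n S x) ^ 2) := by
        simp only [← tail]; exact expect_abs_le_sqrt _
    _ = √(∑ S ∈ high, (ρ ^ S.card * fourierHat n f S) ^ 2) := by
        rw [expect_sq_sum_parity]
    _ ≤ √((ρ ^ d) ^ 2 * expect n (fun x => f x ^ 2)) := Real.sqrt_le_sqrt damped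
    _ = ρ ^ d * √(expect n (fun x => f x ^ 2)) := by
        rw [Real.sqrt_mul (by positivity), Real.sqrt_sq (by positivity)]

def drop (f : (Fin n → Bool) → ℝ) (i : Fin n) (x : Fin n → Bool) : ℝ :=
  f x - min (f (Function.update x i false)) (f (Function.update x i true))

lemma sub_update_le_drop (f : (Fin n → Bool) → ℝ) (i : Fin n) (x : Fin n → Bool) (b : Bool) :
    f x - f (Function.update x i b) ≤ drop f i x := by
  cases b
  · exact sub_le_sub_left (min_le_left _ _) _
  · exact sub_le_sub_left (min_le_right _ _) _

lemma drop_nonneg (f : (Fin n → Bool) → ℝ) (i : Fin n) (x : Fin n → Bool) : 0 ≤ drop f i x := by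
  simpa using sub_update_le_drop f i x (x i)

def bxorBelow (k : ℕ) (x e : Fin n → Bool) : Fin n → Bool :=
  fun i => if (i : ℕ) < k then xor (x i) (e i) else x i

lemma bxorBelow_zero (x e : Fin n → Bool) : bxorBelow 0 x e = x := by
  funext i; simp [bxorBelow]

lemma bxorBelow_self (x e : Fin n → Bool) : bxorBelow n x e = bxor x e := by
  funext i; simp [bxorBelow, bxor]

lemma bxorBelow_involutive (k : ℕ) (e : Fin n → Bool) :
    Function.Involutive (bxorBelow k · e) := fun x => by
  funext i; by_cases h : (i : ℕ) < k <;> simp [bxorBelow, h]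

lemma bxorBelow_succ (i : Fin n) (x e : Fin n → Bool) :
    bxorBelow (i + 1) x e = Function.update (bxorBelow i x e) i (xor (x i) (e i)) := by
  funext j
  rcases lt_trichotomy (j : ℕ) i with h | h | h
  · simp [bxorBelow, h, Nat.lt_succ_of_lt h, Fin.ne_of_lt h]
  · simp [bxorBelow, Fin.ext h]
  · simp [bxorBelow, h.not_gt, Nat.succ_le_of_lt h |>.not_gt, (Fin.ne_of_lt h).symm]

lemma sub_bxorBelow_succ_le (f : (Fin n → Bool) → ℝ) (i : Fin n) (x e : Fin n → Bool) :
    f (bxorBelow i x e) - f (bxorBelow (i + 1) x e)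
      ≤ if e i then drop f i (bxorBelow i x e) else 0 := by
  rw [bxorBelow_succ]
  cases he : e i
  · have unchanged : bxorBelow i x e i = x i := by simp [bxorBelow]
    simp [← unchanged]
  · exact sub_update_le_drop f i _ _

lemma sub_bxor_le (f : (Fin n → Bool) → ℝ) (x e : Fin n → Bool) :
    f x - f (bxor x e) ≤ ∑ i, if e i then drop f i (bxorBelow i x e) else 0 := by
  have telescope := Fin.sum_univ_eq_sum_range
    (fun k => f (bxorBelow k x e) - f (bxorBelow (k + 1) x e)) n
  rw [Finset.sum_range_sub', bxorBelow_zero, bxorBelow_self] at telescope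
  rw [← telescope]
  exact Finset.sum_le_sum fun i _ => sub_bxorBelow_succ_le f i x e

lemma sum_abs_sub_bxor_le (f : (Fin n → Bool) → ℝ) (e : Fin n → Bool) :
    ∑ x, |f x - f (bxor x e)| ≤ 2 * ∑ i, if e i then ∑ x, drop f i x else 0 := by
  rw [(bxor_involutive e).sum_abs_sub_eq_two_mul_sum_posPart]
  gcongr
  calc ∑ x, (f x - f (bxor x e))⁺
      ≤ ∑ x, ∑ i, if e i then drop f i (bxorBelow i x e) else 0 := by
        refine Finset.sum_le_sum fun x _ => sup_le (sub_bxor_le f x e) ?_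
        exact Finset.sum_nonneg fun i _ => by split_ifs <;> simp [drop_nonneg]
    _ = ∑ i, if e i then ∑ x, drop f i x else 0 := by
        rw [Finset.sum_comm]
        refine Finset.sum_congr rfl fun i _ => ?_
        rw [Finset.sum_ite_irrel, Finset.sum_const_zero,
          (bxorBelow_involutive i e).bijective.sum_comp (drop f i)]

lemma sum_abs_sub_noise_le {ρ : ℝ} (hρ : |ρ| ≤ 1) (f : (Fin n → Bool) → ℝ) :
    ∑ x, |f x - noise ρ f x| ≤ (1 - ρ) * ∑ i, ∑ x, drop f i x := by
  have pointwise : ∀ x, |f x - noise ρ f x| ≤ ∑ e, noiseWeight ρ e * |f x - f (bxor x e)| := by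
    intro x
    have average : f x - noise ρ f x = ∑ e, noiseWeight ρ e * (f x - f (bxor x e)) := by
      simp only [noise, mul_sub, Finset.sum_sub_distrib, ← Finset.sum_mul, sum_noiseWeight,
        one_mul]
    rw [average]
    refine (Finset.abs_sum_le_sum_abs _ _).trans_eq (Finset.sum_congr rfl fun e _ => ?_)
    rw [abs_mul, abs_of_nonneg (noiseWeight_nonneg hρ e)]
  calc ∑ x, |f x - noise ρ f x|
      ≤ ∑ e, noiseWeight ρ e * ∑ x, |f x - f (bxor x e)| := by
        simp only [Finset.mul_sum]
        rw [Finset.sum_comm]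
        exact Finset.sum_le_sum fun x _ => pointwise x
    _ ≤ ∑ e, noiseWeight ρ e * (2 * ∑ i, if e i then ∑ x, drop f i x else 0) := by
        gcongr with e
        · exact noiseWeight_nonneg hρ e
        · exact sum_abs_sub_bxor_le f e
    _ = ∑ i, (∑ e, if e i then noiseWeight ρ e else 0) * (2 * ∑ x, drop f i x) := by
        simp only [Finset.mul_sum (Finset.univ : Finset (Fin n)), Finset.sum_mul]
        rw [Finset.sum_comm]
        exact Finset.sum_congr rfl fun i _ => Finset.sum_congr rfl fun e _ => by
          split_ifs <;> ring
    _ = (1 - ρ) * ∑ i, ∑ x, drop f i x := by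
        rw [Finset.mul_sum]
        refine Finset.sum_congr rfl fun i _ => ?_
        rw [sum_ite_noiseWeight]
        ring

lemma expect_abs_sub_noise_le {a ρ : ℝ} (hρ : |ρ| ≤ 1) {f : (Fin n → Bool) → ℝ}
    (hf : SelfBounding n a f) :
    expect n (fun x => |f x - noise ρ f x|) ≤ (1 - ρ) * a * expect n f := by
  have hρ₁ : 0 ≤ 1 - ρ := by linarith [le_abs_self ρ]
  rw [expect, expect, ← mul_div_assoc]
  gcongr
  calc _ ≤ (1 - ρ) * ∑ i, ∑ x, drop f i x := sum_abs_sub_noise_le hρ f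
    _ ≤ (1 - ρ) * ∑ x, a * f x := by
        rw [Finset.sum_comm]
        gcongr with x
        exact (hf x).2
    _ = (1 - ρ) * a * ∑ x, f x := by rw [← Finset.mul_sum, mul_assoc]

end BoolCube

theorem selfbounding_lowdegree_approx_general (n : ℕ) (a : ℝ) (ha : 1 ≤ a)
    (f : (Fin n → Bool) → ℝ) (hf : SelfBounding n a f)
    (ε : ℝ) (hε : ε ∈ Set.Ioc (0 : ℝ) 1)
    (ρ : ℝ) (hρ : ρ = 1 - ε / (2 * a))
    (d : ℕ) (hd : d = ⌈(2 * a / ε) * Real.log (3 / ε)⌉₊)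
    (p : (Fin n → Bool) → ℝ)
    (hp : p = fun x => ∑ S ∈ Finset.univ.filter (fun S : Finset (Fin n) => S.card < d),
      ρ ^ S.card * fourierHat n f S * parity n S x) :
    expect n (fun x => |f x - p x|) ≤ ε * Real.sqrt (expect n (fun x => (f x) ^ 2)) := by
  obtain ⟨hε₀, hε₁⟩ := hε
  have ht₀ : 0 ≤ ε / (2 * a) := by positivity
  have ht₁ : ε / (2 * a) ≤ 1 := by rw [div_le_one (by positivity)]; linarith
  have hρ₀ : 0 ≤ ρ := by linarith
  have hρ₁ : ρ ≤ 1 := by linarith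
  have hρd : ρ ^ d ≤ ε / 3 := by
    refine hρ ▸ one_sub_pow_le_of_log_le ht₁ (by positivity) ?_
    calc Real.log (1 / (ε / 3)) = (2 * a / ε) * Real.log (3 / ε) * (ε / (2 * a)) := by
          field_simp
      _ ≤ d * (ε / (2 * a)) := by rw [hd]; gcongr; exact Nat.le_ceil _
  have hnoise : (1 - ρ) * a = ε / 2 := by rw [hρ]; field_simp; ring
  have hmean : expect n f ≤ √(expect n fun x => f x ^ 2) :=
    (BoolCube.expect_mono fun x => le_abs_self (f x)).trans (BoolCube.expect_abs_le_sqrt f)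
  have hnorm : 0 ≤ √(expect n fun x => f x ^ 2) := Real.sqrt_nonneg _
  subst hp
  calc _ ≤ expect n (fun x => |f x - BoolCube.noise ρ f x|)
        + expect n (fun x => |BoolCube.noise ρ f x - _|) := BoolCube.expect_abs_sub_le _ _ _
    _ ≤ ε / 2 * √(expect n fun x => f x ^ 2) + ε / 3 * √(expect n fun x => f x ^ 2) := by
        gcongr
        · rw [← hnoise]
          exact (BoolCube.expect_abs_sub_noise_le (abs_le.mpr ⟨by linarith, hρ₁⟩) hf).trans
            (mul_le_mul_of_nonneg_left hmean (by positivity))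
        · exact (BoolCube.expect_abs_noise_sub_low_le hρ₀ hρ₁ d f).trans
            (mul_le_mul_of_nonneg_right hρd hnorm)
    _ ≤ ε * √(expect n fun x => f x ^ 2) := by nlinarith

theorem selfbounding_lowdegree_approx (n : ℕ) (a : ℝ) (ha : 1 ≤ a) (hn : 4 * a ≤ (n : ℝ))
    (f : (Fin n → Bool) → ℝ) (hf0 : ∀ x, 0 ≤ f x) (hf : SelfBounding n a f)
    (ε : ℝ) (hε : ε ∈ Set.Ioc (0 : ℝ) 1)
    (ρ : ℝ) (hρ : ρ = 1 - ε / (2 * a))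
    (d : ℕ) (hd : d = ⌈(2 * a / ε) * Real.log (3 / ε)⌉₊)
    (p : (Fin n → Bool) → ℝ)
    (hp : p = fun x => ∑ S ∈ Finset.univ.filter (fun S : Finset (Fin n) => S.card < d),
      ρ ^ S.card * fourierHat n f S * parity n S x) :
    expect n (fun x => |f x - p x|) ≤ ε * Real.sqrt (expect n (fun x => (f x) ^ 2)) :=
  selfbounding_lowdegree_approx_general n a ha f hf ε hε ρ hρ d hd p hp
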